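/- Consider a weakly reversible generalized chemical reaction network. If for all edge labels k ∈ ℝ^E_+ every complex-balanced equilibrium is linearly stable (i.e., for all k ∈ ℝ^E_+ and all x* ∈ Z_k, the Jacobian J(x*) is stable on S), then complex-balanced equilibria are unique in their stoichiometric classes: for all k ∈ ℝ^E_+, if x₁, x₂ ∈ Z_k and x₁ − x₂ ∈ S, then x₁ = x₂. -/

import Mathlib

open Matrix Polynomial Filter Topology

noncomputable section

/-- `D ∈ 𝒟₊`: a diagonal matrix with positive diagonal entries. -/
def IsPosDiag {n : ℕ} (D : Matrix (Fin n) (Fin n) ℝ) : Prop :=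
  ∃ d : Fin n → ℝ, (∀ i, 0 < d i) ∧ D = Matrix.diagonal d

/-- A real square matrix is stable if every root in `ℂ` of its characteristic
polynomial has negative real part. -/
def IsStableMat {n : ℕ} (A : Matrix (Fin n) (Fin n) ℝ) : Prop :=
  ∀ z : ℂ, (A.charpoly.map (algebraMap ℝ ℂ)).IsRoot z → z.re < 0

/-- A real square matrix is semistable if every root in `ℂ` of its characteristic
polynomial has non-positive real part. -/
def IsSemistableMat {n : ℕ} (A : Matrix (Fin n) (Fin n) ℝ) : Prop :=
  ∀ z : ℂ, (A.charpoly.map (algebraMap ℝ ℂ)).IsRoot z → z.re ≤ 0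

/-- The restriction `A|_S : S → S` of a matrix whose range is contained in `S`. -/
def restrictedMap {n : ℕ} (A : Matrix (Fin n) (Fin n) ℝ) (S : Submodule ℝ (Fin n → ℝ))
    (h : ∀ v, A.mulVec v ∈ S) : S →ₗ[ℝ] S :=
  A.mulVecLin.restrict (p := S) (q := S) (fun x _ => by simpa using h x)

/-- `A` is stable on `S`: `range A ⊆ S` and every eigenvalue over `ℂ` (root of the
characteristic polynomial) of `A|_S : S → S` has negative real part. -/
def IsStableOn {n : ℕ} (A : Matrix (Fin n) (Fin n) ℝ) (S : Submodule ℝ (Fin n → ℝ)) : Prop :=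
  ∃ h : ∀ v, A.mulVec v ∈ S,
    ∀ z : ℂ, (((restrictedMap A S h).charpoly).map (algebraMap ℝ ℂ)).IsRoot z → z.re < 0

/-- `A` is semistable on `S`: `range A ⊆ S` and every eigenvalue over `ℂ` of
`A|_S : S → S` has non-positive real part. -/
def IsSemistableOn {n : ℕ} (A : Matrix (Fin n) (Fin n) ℝ) (S : Submodule ℝ (Fin n → ℝ)) : Prop :=
  ∃ h : ∀ v, A.mulVec v ∈ S,
    ∀ z : ℂ, (((restrictedMap A S h).charpoly).map (algebraMap ℝ ℂ)).IsRoot z → z.re ≤ 0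

/-- `M < 0` on `S`. -/
def NegDefOn {n : ℕ} (M : Matrix (Fin n) (Fin n) ℝ) (S : Submodule ℝ (Fin n → ℝ)) : Prop :=
  ∀ x ∈ S, x ≠ 0 → x ⬝ᵥ M.mulVec x < 0

/-- `M ≤ 0` on `S`. -/
def NegSemidefOn {n : ℕ} (M : Matrix (Fin n) (Fin n) ℝ) (S : Submodule ℝ (Fin n → ℝ)) : Prop :=
  ∀ x ∈ S, x ⬝ᵥ M.mulVec x ≤ 0

/-- `M > 0` on `S`. -/
def PosDefOn {n : ℕ} (M : Matrix (Fin n) (Fin n) ℝ) (S : Submodule ℝ (Fin n → ℝ)) : Prop :=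
  ∀ x ∈ S, x ≠ 0 → 0 < x ⬝ᵥ M.mulVec x

/-- The Laplacian matrix `A_k` of the labeled digraph `(V,E)` with edge labels `k`:
`(A_k)_{i',i} = k_{i→i'}` if `(i→i') ∈ E`, `(A_k)_{i,i} = -∑_{(i→i')∈E} k_{i→i'}`,
and `0` otherwise (the graph has no self-loops). -/
def laplacian {m : ℕ} (E : Finset (Fin m × Fin m)) (k : Fin m × Fin m → ℝ) :
    Matrix (Fin m) (Fin m) ℝ :=
  fun i' i => (if (i, i') ∈ E then k (i, i') else 0)
    - (if i' = i then ∑ e ∈ E.filter (fun e => e.1 = i), k e else 0)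

/-- The incidence matrix `I_E ∈ ℝ^{V×E}`, with column `e_{i'} - e_i` for each edge `(i→i')`. -/
def incidence {m : ℕ} (E : Finset (Fin m × Fin m)) :
    Matrix (Fin m) {e : Fin m × Fin m // e ∈ E} ℝ :=
  fun i e => (if (e : Fin m × Fin m).2 = i then (1 : ℝ) else 0)
    - (if (e : Fin m × Fin m).1 = i then 1 else 0)

/-- `x^Ỹ ∈ ℝ^V`, defined by `(x^Ỹ)_j = ∏_i x_i ^ (Ỹ)_{ij}` (real exponents). -/
def powVec {n m : ℕ} (x : Fin n → ℝ) (Yt : Matrix (Fin n) (Fin m) ℝ) : Fin m → ℝ :=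
  fun j => ∏ i, (x i) ^ (Yt i j)

/-- The digraph `(V,E)` is weakly reversible: every connected component is strongly
connected, i.e. whenever `a` and `b` are connected by an undirected path, there is a
directed path from `a` to `b`. -/
def WeaklyReversible {m : ℕ} (E : Finset (Fin m × Fin m)) : Prop :=
  ∀ a b : Fin m,
    Relation.ReflTransGen (fun u v => (u, v) ∈ E ∨ (v, u) ∈ E) a b →
    Relation.ReflTransGen (fun u v => (u, v) ∈ E) a b

/-- The stoichiometric subspace `S = range (Y I_E)`. -/
def stoichSubspace {n m : ℕ} (Y : Matrix (Fin n) (Fin m) ℝ) (E : Finset (Fin m × Fin m)) :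
    Submodule ℝ (Fin n → ℝ) :=
  LinearMap.range (Y * incidence E).mulVecLin

/-- The Jacobian matrix `J(x) = Y A_k diag(x^Ỹ) Ỹᵀ diag(x⁻¹)` of `x ↦ Y A_k x^Ỹ`. -/
def jacobianMat {n m : ℕ} (E : Finset (Fin m × Fin m)) (k : Fin m × Fin m → ℝ)
    (Y Yt : Matrix (Fin n) (Fin m) ℝ) (x : Fin n → ℝ) : Matrix (Fin n) (Fin n) ℝ :=
  Y * laplacian E k * Matrix.diagonal (powVec x Yt) * Ytᵀ * Matrix.diagonal (fun i => (x i)⁻¹)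

/-- `C` is (the edge set of) a cycle: `{i_1→i_2, …, i_{r-1}→i_r, i_r→i_1}` with
pairwise distinct vertices `i_1, …, i_r` (and `r ≥ 2`). -/
def IsCycleEdges {m : ℕ} (C : Finset (Fin m × Fin m)) : Prop :=
  ∃ (r : ℕ) (f : Fin (r + 2) → Fin m), Function.Injective f ∧
    C = Finset.image (fun j => (f j, f (j + 1))) Finset.univ

/-- The edge set of the directed `m`-cycle `1 → 2 → ⋯ → m → 1`. -/
def cycleEdges (m : ℕ) [NeZero m] : Finset (Fin m × Fin m) :=
  Finset.image (fun i : Fin m => (i, i + 1)) Finset.univ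

end

section auxstmt9

lemma lap_mulVec {m : ℕ} (E : Finset (Fin m × Fin m)) (k : Fin m × Fin m → ℝ)
    (z : Fin m → ℝ) (j : Fin m) :
    (laplacian E k).mulVec z j
      = (∑ i, if (i, j) ∈ E then k (i, j) * z i else 0)
        - (∑ e ∈ E.filter (fun e => e.1 = j), k e) * z j := by
  classical
  simp only [laplacian, Matrix.mulVec, dotProduct, sub_mul, Finset.sum_sub_distrib,
    ite_mul, zero_mul]
  congr 1
  rw [Finset.sum_ite_eq]
  simp

lemma eq_char {m : ℕ} (E : Finset (Fin m × Fin m)) (k : Fin m × Fin m → ℝ)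
    (z : Fin m → ℝ) (h : (laplacian E k).mulVec z = 0) (j : Fin m) :
    (∑ i, if (i, j) ∈ E then k (i, j) * z i else 0)
      = (∑ e ∈ E.filter (fun e => e.1 = j), k e) * z j := by
  have := congrFun h j
  rw [lap_mulVec] at this
  have : _ = (0 : ℝ) := this
  linarith

/-- conn relation -/
abbrev Conn {m : ℕ} (E : Finset (Fin m × Fin m)) : Fin m → Fin m → Prop :=
  Relation.ReflTransGen (fun u v => (u, v) ∈ E ∨ (v, u) ∈ E)

lemma conn_symm {m : ℕ} (E : Finset (Fin m × Fin m)) {a b : Fin m} (h : Conn E a b) :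
    Conn E b a :=
  by haveI : Std.Symm (fun u v : Fin m => (u, v) ∈ E ∨ (v, u) ∈ E) := ⟨fun _ _ h => h.symm⟩; exact Std.Symm.symm _ _ h

lemma ratio_const {m : ℕ} (E : Finset (Fin m × Fin m)) (hwr : WeaklyReversible E)
    (k : Fin m × Fin m → ℝ) (hk : ∀ e ∈ E, 0 < k e)
    (z₁ z₂ : Fin m → ℝ) (h₁ : ∀ i, 0 < z₁ i) (h₂ : ∀ i, 0 < z₂ i)
    (e₁ : (laplacian E k).mulVec z₁ = 0) (e₂ : (laplacian E k).mulVec z₂ = 0)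
    {a b : Fin m} (hab : Conn E a b) :
    z₂ a / z₁ a = z₂ b / z₁ b := by
  classical
  set ρ : Fin m → ℝ := fun i => z₂ i / z₁ i with hρ
  -- the component of a
  set C : Finset (Fin m) := Finset.univ.filter (fun c => Conn E a c) with hC
  have haC : a ∈ C := by
    simp only [hC, Finset.mem_filter, Finset.mem_univ, true_and]
    exact Relation.ReflTransGen.refl
  obtain ⟨j₀, hj₀C, hmax⟩ := Finset.exists_max_image C ρ ⟨a, haC⟩
  have hj₀conn : Conn E a j₀ := by simpa [hC] using hj₀C
  set M : ℝ := ρ j₀ with hM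
  -- key step: max set is closed under in-neighbors
  have key : ∀ j, Conn E a j → ρ j = M → ∀ i, (i, j) ∈ E → ρ i = M := by
    intro j hj hρj i hij
    have t₁ := eq_char E k z₁ e₁ j
    have t₂ := eq_char E k z₂ e₂ j
    have hconn_in : ∀ i', (i', j) ∈ E → Conn E a i' := by
      intro i' h'
      exact hj.trans (Relation.ReflTransGen.single (Or.inr h'))
    have hle : ∀ i', (i', j) ∈ E → ρ i' ≤ M := by
      intro i' h'
      exact hmax i' (by simp [hC, hconn_in i' h'])
    have hsum : ∑ i', (if (i', j) ∈ E then k (i', j) * z₁ i' * (M - ρ i') else 0) = 0 := by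
      have expand : ∀ i' : Fin m,
          (if (i', j) ∈ E then k (i', j) * z₁ i' * (M - ρ i') else 0)
            = M * (if (i', j) ∈ E then k (i', j) * z₁ i' else 0)
              - (if (i', j) ∈ E then k (i', j) * z₂ i' else 0) := by
        intro i'
        by_cases h' : (i', j) ∈ E
        · simp only [h', if_true]
          have hz : ρ i' * z₁ i' = z₂ i' := div_mul_cancel₀ _ (h₁ i').ne'
          linear_combination (-(k (i', j))) * hz
        · simp [h']
      rw [Finset.sum_congr rfl (fun i' _ => expand i')]
      rw [Finset.sum_sub_distrib, ← Finset.mul_sum, t₁, t₂]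
      have hzj : z₂ j = ρ j * z₁ j := (div_mul_cancel₀ _ (h₁ j).ne').symm
      rw [hzj, hρj]
      ring
    have hnn : ∀ i' ∈ Finset.univ,
        (0:ℝ) ≤ (if (i', j) ∈ E then k (i', j) * z₁ i' * (M - ρ i') else 0) := by
      intro i' _
      by_cases h' : (i', j) ∈ E
      · simp only [h', if_true]
        have := hle i' h'
        have := hk _ h'
        have := h₁ i'
        have h0 : 0 ≤ k (i', j) * z₁ i' := by positivity
        have : 0 ≤ M - ρ i' := by linarith
        exact mul_nonneg h0 this
      · simp [h']
    have hzero := (Finset.sum_eq_zero_iff_of_nonneg hnn).mp hsum i (Finset.mem_univ i)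
    rw [if_pos hij] at hzero
    have hk' := hk _ hij
    have hz' := h₁ i
    have : M - ρ i = 0 := by
      rcases mul_eq_zero.mp hzero with h | h
      · rcases mul_eq_zero.mp h with h | h
        · linarith
        · linarith
      · exact h
    linarith
  have dir : ∀ c, Relation.ReflTransGen (fun u v => (u, v) ∈ E) c j₀ →
      Conn E a c → ρ c = M := by
    intro c hc
    induction hc using Relation.ReflTransGen.head_induction_on with
    | refl => exact fun _ => rfl
    | head h' htail ih =>
      rename_i c' mid
      intro hac
      have hmid : Conn E a mid := hac.trans (Relation.ReflTransGen.single (Or.inl h'))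
      exact key mid hmid (ih hmid) c' h'
  have ha' : ρ a = M := dir a (hwr a j₀ hj₀conn) Relation.ReflTransGen.refl
  have hb' : ρ b = M := dir b (hwr b j₀ ((conn_symm E hab).trans hj₀conn)) hab
  exact ha'.trans hb'.symm

lemma kernel_smul {m : ℕ} (E : Finset (Fin m × Fin m)) (k : Fin m × Fin m → ℝ)
    (z g : Fin m → ℝ) (hz : (laplacian E k).mulVec z = 0)
    (hg : ∀ i j, (i, j) ∈ E → g i = g j) :
    (laplacian E k).mulVec (fun i => g i * z i) = 0 := by
  classical
  funext j
  rw [lap_mulVec]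
  have h1 : (∑ i, if (i, j) ∈ E then k (i, j) * (g i * z i) else 0)
      = g j * ∑ i, (if (i, j) ∈ E then k (i, j) * z i else 0) := by
    rw [Finset.mul_sum]
    refine Finset.sum_congr rfl fun i _ => ?_
    by_cases h : (i, j) ∈ E
    · simp only [h, if_true]
      rw [hg i j h]; ring
    · simp [h]
  simp only [h1, eq_char E k z hz j, Pi.zero_apply]
  ring

lemma lap_scale_mulVec {m : ℕ} (E : Finset (Fin m × Fin m)) (k : Fin m × Fin m → ℝ)
    (c w : Fin m → ℝ) :
    (laplacian E (fun e => k e * c e.1)).mulVec w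
      = (laplacian E k).mulVec (fun i => c i * w i) := by
  classical
  funext j
  rw [lap_mulVec, lap_mulVec]
  congr 1
  · refine Finset.sum_congr rfl fun i _ => ?_
    by_cases h : (i, j) ∈ E
    · simp only [h, if_true]; ring
    · simp [h]
  · have h2 : (∑ e ∈ E.filter (fun e => e.1 = j), k e * c e.1)
        = (∑ e ∈ E.filter (fun e => e.1 = j), k e) * c j := by
      rw [Finset.sum_mul]
      refine Finset.sum_congr rfl fun e he => ?_
      rw [(Finset.mem_filter.mp he).2]
    rw [h2]; ring

lemma powVec_pos {n m : ℕ} (Yt : Matrix (Fin n) (Fin m) ℝ) {x : Fin n → ℝ}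
    (hx : ∀ i, 0 < x i) (j : Fin m) : 0 < powVec x Yt j :=
  Finset.prod_pos fun i _ => Real.rpow_pos_of_pos (hx i) _

lemma log_powVec {n m : ℕ} (Yt : Matrix (Fin n) (Fin m) ℝ) {x : Fin n → ℝ}
    (hx : ∀ i, 0 < x i) (j : Fin m) :
    Real.log (powVec x Yt j) = ∑ i, Yt i j * Real.log (x i) := by
  rw [powVec, Real.log_prod (fun i _ => (Real.rpow_pos_of_pos (hx i) _).ne')]
  exact Finset.sum_congr rfl fun i _ => Real.log_rpow (hx i) _

end auxstmt9

/-- if all complex-balanced equilibria are linearly stable (for all rate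
constants), then they are unique in their stoichiometric classes. -/
theorem stmt9 {n m : ℕ} (E : Finset (Fin m × Fin m)) (hE : ∀ e ∈ E, e.1 ≠ e.2)
    (hwr : WeaklyReversible E) (Y Yt : Matrix (Fin n) (Fin m) ℝ)
    (hstab : ∀ k : Fin m × Fin m → ℝ, (∀ e ∈ E, 0 < k e) →
      ∀ x : Fin n → ℝ, (∀ i, 0 < x i) →
        (laplacian E k).mulVec (powVec x Yt) = 0 →
        IsStableOn (jacobianMat E k Y Yt x) (stoichSubspace Y E)) :
    ∀ k : Fin m × Fin m → ℝ, (∀ e ∈ E, 0 < k e) →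
      ∀ x₁ x₂ : Fin n → ℝ, (∀ i, 0 < x₁ i) → (∀ i, 0 < x₂ i) →
        (laplacian E k).mulVec (powVec x₁ Yt) = 0 →
        (laplacian E k).mulVec (powVec x₂ Yt) = 0 →
        x₁ - x₂ ∈ stoichSubspace Y E → x₁ = x₂ := by
  classical
  intro k hk x₁ x₂ hx₁ hx₂ heq₁ heq₂ hmem
  by_contra hx
  set S := stoichSubspace Y E with hS
  set u : Fin n → ℝ := fun i => Real.log (x₂ i) - Real.log (x₁ i) with hu
  have hueq : ∀ i, u i = 0 → x₁ i = x₂ i := by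
    intro i h0
    have hl : Real.log (x₁ i) = Real.log (x₂ i) := by
      simp only [hu] at h0; linarith
    rw [← Real.exp_log (hx₁ i), ← Real.exp_log (hx₂ i), hl]
  set xs : Fin n → ℝ := fun i => if x₁ i = x₂ i then x₁ i else (x₂ i - x₁ i) / u i with hxs
  have hxspos : ∀ i, 0 < xs i := by
    intro i
    by_cases h : x₁ i = x₂ i
    · simpa [hxs, if_pos h] using hx₁ i
    · simp only [hxs, if_neg h]
      rcases lt_or_gt_of_ne h with hlt | hgt
      · exact div_pos (sub_pos.mpr hlt) (sub_pos.mpr (Real.log_lt_log (hx₁ i) hlt))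
      · apply div_pos_of_neg_of_neg (sub_neg.mpr hgt) (sub_neg.mpr (Real.log_lt_log (hx₂ i) hgt))
  have hxu : ∀ i, xs i * u i = x₂ i - x₁ i := by
    intro i
    by_cases h : x₁ i = x₂ i
    · have h0 : u i = 0 := by simp [hu, h]
      rw [h0, mul_zero, h, sub_self]
    · have hu0 : u i ≠ 0 := fun h0 => h (hueq i h0)
      simp only [hxs, if_neg h]
      field_simp
  have hdiag : ∀ i, (xs i)⁻¹ * (x₂ i - x₁ i) = u i := by
    intro i
    rw [← hxu i]
    field_simp [(hxspos i).ne']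
  -- the scaled rate constants
  set c : Fin m → ℝ := fun j => powVec x₁ Yt j / powVec xs Yt j with hc
  have hcpos : ∀ j, 0 < c j := fun j =>
    div_pos (powVec_pos Yt hx₁ j) (powVec_pos Yt hxspos j)
  set k' : Fin m × Fin m → ℝ := fun e => k e * c e.1 with hk'def
  have hk' : ∀ e ∈ E, 0 < k' e := fun e he => mul_pos (hk e he) (hcpos e.1)
  have hczs : ∀ j, c j * powVec xs Yt j = powVec x₁ Yt j := fun j =>
    div_mul_cancel₀ _ (powVec_pos Yt hxspos j).ne'
  have heqs : (laplacian E k').mulVec (powVec xs Yt) = 0 := by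
    rw [hk'def, lap_scale_mulVec]
    have : (fun j => c j * powVec xs Yt j) = powVec x₁ Yt := funext hczs
    rw [this, heq₁]
  -- the log-ratio vector, constant along edges
  set w : Fin m → ℝ := fun j => Real.log (powVec x₂ Yt j) - Real.log (powVec x₁ Yt j) with hw
  have hwconst : ∀ i j, (i, j) ∈ E → w i = w j := by
    intro i j hij
    have hr := ratio_const E hwr k hk (powVec x₁ Yt) (powVec x₂ Yt)
      (powVec_pos Yt hx₁) (powVec_pos Yt hx₂) heq₁ heq₂
      (Relation.ReflTransGen.single (Or.inl hij))
    have hlog := congrArg Real.log hr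
    rwa [Real.log_div (powVec_pos Yt hx₂ i).ne' (powVec_pos Yt hx₁ i).ne',
      Real.log_div (powVec_pos Yt hx₂ j).ne' (powVec_pos Yt hx₁ j).ne'] at hlog
  -- the Jacobian at xs kills x₂ - x₁
  have hker : (jacobianMat E k' Y Yt xs).mulVec (x₂ - x₁) = 0 := by
    rw [jacobianMat, ← Matrix.mulVec_mulVec, ← Matrix.mulVec_mulVec,
      ← Matrix.mulVec_mulVec, ← Matrix.mulVec_mulVec]
    have s1 : (Matrix.diagonal fun i => (xs i)⁻¹).mulVec (x₂ - x₁) = u := by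
      funext i
      rw [Matrix.mulVec_diagonal]
      exact hdiag i
    rw [s1]
    have s2 : Ytᵀ.mulVec u = w := by
      funext j
      simp only [Matrix.mulVec, dotProduct, Matrix.transpose_apply, hw,
        log_powVec Yt hx₁, log_powVec Yt hx₂, hu]
      rw [← Finset.sum_sub_distrib]
      exact Finset.sum_congr rfl fun i _ => by ring
    rw [s2]
    have s3 : (Matrix.diagonal (powVec xs Yt)).mulVec w = fun j => powVec xs Yt j * w j := by
      funext j; rw [Matrix.mulVec_diagonal]
    rw [s3]
    have s4 : (laplacian E k').mulVec (fun j => powVec xs Yt j * w j)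
        = (laplacian E k).mulVec (fun j => w j * powVec x₁ Yt j) := by
      rw [hk'def, lap_scale_mulVec]
      have heqfun : (fun i => c i * (powVec xs Yt i * w i)) = fun j => w j * powVec x₁ Yt j := by
        funext j
        rw [← hczs j]; ring
      rw [heqfun]
    rw [s4, kernel_smul E k (powVec x₁ Yt) w heq₁ hwconst, Matrix.mulVec_zero]
  have hker' : (jacobianMat E k' Y Yt xs).mulVec (x₁ - x₂) = 0 := by
    rw [show x₁ - x₂ = -(x₂ - x₁) from (neg_sub _ _).symm, Matrix.mulVec_neg, hker, neg_zero]
  -- apply the stability hypothesis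
  obtain ⟨hmemS, hroot⟩ := hstab k' hk' xs hxspos heqs
  set f := restrictedMap (jacobianMat E k' Y Yt xs) S hmemS with hf
  have hvne : (⟨x₁ - x₂, hmem⟩ : S) ≠ 0 := by
    intro h0
    exact hx (sub_eq_zero.mp (congrArg Subtype.val h0))
  have hf0 : f ⟨x₁ - x₂, hmem⟩ = 0 := by
    apply Subtype.ext
    show (jacobianMat E k' Y Yt xs).mulVecLin (x₁ - x₂) = 0
    simpa [Matrix.mulVecLin_apply] using hker'
  have hex : ∃ v : S, v ≠ 0 ∧ f v = 0 := ⟨⟨x₁ - x₂, hmem⟩, hvne, hf0⟩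
  have hcc : Polynomial.constantCoeff f.charpoly = 0 :=
    ((LinearMap.hasEigenvalue_zero_tfae f).out 5 2).mp hex
  have hroot0 : ((f.charpoly).map (algebraMap ℝ ℂ)).IsRoot 0 := by
    rw [Polynomial.IsRoot, Polynomial.eval_zero_map, ← Polynomial.coeff_zero_eq_eval_zero]
    rw [Polynomial.constantCoeff_apply] at hcc
    rw [hcc, map_zero]
  have := hroot 0 hroot0
  simp at this
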